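/- Let X be a reflexive Banach space with X and X* strictly convex, let A ⊂ X be nonempty, let f : X → ℝ be Lipschitz continuous of rank L on a neighborhood of A, and assume 0 ∉ ∂f(A). Let ã be the unique element of ∂f(A) of minimal norm and h̃ the unique optimal descent direction of f on A. Then every h ∈ X with ‖h − h̃‖ < ‖ã‖/L is a descent direction of f on A, i.e. f⁰(A;h) < 0. -/

import Mathlib

open Filter Metric Set NormedSpace
open scoped NNReal

variable {X : Type*} [NormedAddCommGroup X] [NormedSpace ℝ X]

/-- Clarke's generalized directional derivative
`f⁰(x;h) = limsup_{y→x, t↓0⁺} (f(y+th) − f(y))/t`. -/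
noncomputable def clarkeDeriv (f : X → ℝ) (x : X) (h : X) : ℝ :=
  Filter.limsup (fun p : X × ℝ => (f (p.1 + p.2 • h) - f p.1) / p.2)
    ((nhds x) ×ˢ (nhdsWithin 0 (Set.Ioi 0)))

/-- Clarke's generalized gradient `∂f(x) = {a ∈ X* : ⟨a,h⟩ ≤ f⁰(x;h) ∀ h}`. -/
def clarkeGrad (f : X → ℝ) (x : X) : Set (StrongDual ℝ X) :=
  {a | ∀ h : X, a h ≤ clarkeDeriv f x h}

/-- Directional derivative of `f` on the set `A`: `f⁰(A;h) = sup_{y∈A} f⁰(y;h)`. -/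
noncomputable def setDeriv (f : X → ℝ) (A : Set X) (h : X) : ℝ :=
  sSup ((fun y => clarkeDeriv f y h) '' A)

/-- Gradient of `f` on the set `A`: the weak*-closed convex hull of `⋃_{y∈A} ∂f(y)`. -/
def setGrad (f : X → ℝ) (A : Set X) : Set (StrongDual ℝ X) :=
  {a | StrongDual.toWeakDual a ∈
    closure ((StrongDual.toWeakDual (𝕜 := ℝ) (E := X)) '' (convexHull ℝ (⋃ y ∈ A, clarkeGrad f y)))}

/-- `h` is an optimal (steepest) descent direction of `f` on `A`. -/
noncomputable def IsOptimalDescent (f : X → ℝ) (A : Set X) (h : X) : Prop :=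
  ‖h‖ = 1 ∧ (∀ h' : X, ‖h'‖ ≤ 1 → setDeriv f A h ≤ setDeriv f A h') ∧ setDeriv f A h < 0


section Aux

open Filter

variable {f : X → ℝ} {L : ℝ≥0} {U : Set X} {y : X}

/-- The difference quotient appearing in Clarke's derivative. -/
private noncomputable def dq (f : X → ℝ) (h : X) (p : X × ℝ) : ℝ := (f (p.1 + p.2 • h) - f p.1) / p.2

private lemma clarkeDeriv_eq (f : X → ℝ) (x h : X) :
    clarkeDeriv f x h = Filter.limsup (dq f h) ((nhds x) ×ˢ (nhdsWithin 0 (Set.Ioi 0))) := rfl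

instance neBotF (y : X) : Filter.NeBot ((nhds y) ×ˢ (nhdsWithin (0:ℝ) (Set.Ioi 0))) :=
  Filter.prod_neBot.mpr ⟨inferInstance, inferInstance⟩

private lemma eventually_mem (hU : IsOpen U) (hy : y ∈ U) (h : X) :
    ∀ᶠ p : X × ℝ in (nhds y) ×ˢ (nhdsWithin (0:ℝ) (Set.Ioi 0)),
      p.1 ∈ U ∧ p.1 + p.2 • h ∈ U ∧ 0 < p.2 := by
  obtain ⟨ε, hε, hball⟩ := Metric.isOpen_iff.mp hU y hy
  have h1 : ∀ᶠ z in nhds y, z ∈ ball y (ε/2) := ball_mem_nhds y (by positivity)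
  have h2 : ∀ᶠ t : ℝ in nhdsWithin (0:ℝ) (Set.Ioi 0), 0 < t ∧ t * ‖h‖ < ε/2 := by
    have ht : Tendsto (fun t : ℝ => t * ‖h‖) (nhdsWithin (0:ℝ) (Set.Ioi 0)) (nhds 0) := by
      have : Tendsto (fun t : ℝ => t * ‖h‖) (nhds 0) (nhds 0) := by
        simpa using (continuous_mul_right ‖h‖).tendsto 0
      exact this.mono_left nhdsWithin_le_nhds
    have h3 := ht.eventually_lt_const (by positivity : (0:ℝ) < ε/2)
    exact (eventually_mem_nhdsWithin.mono fun t ht => ht).and h3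
  filter_upwards [h1.prod_inl (nhdsWithin (0:ℝ) (Set.Ioi 0)), h2.prod_inr (nhds y)]
    with p hp1 hp2
  obtain ⟨hpt, hph⟩ := hp2
  refine ⟨hball (by simpa [mem_ball] using hp1.trans_le (by linarith)), ?_, hpt⟩
  apply hball
  have : dist (p.1 + p.2 • h) y ≤ ‖p.2 • h‖ + dist p.1 y := by
    calc dist (p.1 + p.2 • h) y ≤ dist (p.1 + p.2 • h) p.1 + dist p.1 y := dist_triangle _ _ _
    _ = ‖p.2 • h‖ + dist p.1 y := by rw [dist_eq_norm, add_sub_cancel_left]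
  have h4 : ‖p.2 • h‖ = p.2 * ‖h‖ := by rw [norm_smul, Real.norm_eq_abs, abs_of_pos hpt]
  have h5 : dist p.1 y < ε/2 := hp1
  simp only [mem_ball]
  linarith [this, h4 ▸ hph]

private lemma dq_abs_le (hf : LipschitzOnWith L f U) {h : X} {p : X × ℝ}
    (hp : p.1 ∈ U ∧ p.1 + p.2 • h ∈ U ∧ 0 < p.2) : |dq f h p| ≤ L * ‖h‖ := by
  obtain ⟨h1, h2, h3⟩ := hp
  have hd := hf.dist_le_mul _ h2 _ h1
  rw [Real.dist_eq] at hd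
  have hdd : dist (p.1 + p.2 • h) p.1 = p.2 * ‖h‖ := by
    rw [dist_eq_norm, add_sub_cancel_left, norm_smul, Real.norm_eq_abs, abs_of_pos h3]
  rw [hdd] at hd
  rw [dq, abs_div, abs_of_pos h3, div_le_iff₀ h3]
  calc |f (p.1 + p.2 • h) - f p.1| ≤ L * (p.2 * ‖h‖) := hd
  _ = L * ‖h‖ * p.2 := by ring

private lemma bddAbove_dq (hU : IsOpen U) (hy : y ∈ U) (hf : LipschitzOnWith L f U) (h : X) :
    IsBoundedUnder (· ≤ ·) ((nhds y) ×ˢ (nhdsWithin (0:ℝ) (Set.Ioi 0))) (dq f h) :=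
  isBoundedUnder_of_eventually_le (a := L * ‖h‖)
    ((eventually_mem hU hy h).mono fun _ hp => (abs_le.mp (dq_abs_le hf hp)).2)

private lemma bddBelow_dq (hU : IsOpen U) (hy : y ∈ U) (hf : LipschitzOnWith L f U) (h : X) :
    IsBoundedUnder (· ≥ ·) ((nhds y) ×ˢ (nhdsWithin (0:ℝ) (Set.Ioi 0))) (dq f h) :=
  isBoundedUnder_of_eventually_ge (a := -(L * ‖h‖))
    ((eventually_mem hU hy h).mono fun _ hp => (abs_le.mp (dq_abs_le hf hp)).1)

private lemma clarkeDeriv_le (hU : IsOpen U) (hy : y ∈ U) (hf : LipschitzOnWith L f U) (h : X) :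
    clarkeDeriv f y h ≤ L * ‖h‖ := by
  rw [clarkeDeriv_eq]
  exact Filter.limsup_le_of_le ((bddBelow_dq hU hy hf h).isCoboundedUnder_le)
    ((eventually_mem hU hy h).mono fun _ hp => (abs_le.mp (dq_abs_le hf hp)).2)

private lemma le_clarkeDeriv (hU : IsOpen U) (hy : y ∈ U) (hf : LipschitzOnWith L f U) (h : X) :
    -(L * ‖h‖ : ℝ) ≤ clarkeDeriv f y h := by
  rw [clarkeDeriv_eq]
  refine Filter.le_limsup_of_le (bddAbove_dq hU hy hf h) fun b hb => ?_
  obtain ⟨p, hp1, hp2⟩ :=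
    (hb.and ((eventually_mem hU hy h).mono fun _ hp => (abs_le.mp (dq_abs_le hf hp)).1)).exists
  linarith

end Aux

section Aux2

open Filter

variable {f : X → ℝ} {L : ℝ≥0} {U : Set X} {y : X}

private lemma clarkeDeriv_le_add (hU : IsOpen U) (hy : y ∈ U) (hf : LipschitzOnWith L f U)
    (h h' : X) : clarkeDeriv f y h ≤ clarkeDeriv f y h' + L * ‖h - h'‖ := by
  have ev : ∀ᶠ p : X × ℝ in (nhds y) ×ˢ (nhdsWithin (0:ℝ) (Set.Ioi 0)),
      dq f h p ≤ dq f h' p + L * ‖h - h'‖ := by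
    filter_upwards [eventually_mem hU hy h, eventually_mem hU hy h'] with p hp hp'
    obtain ⟨h1, h2, h3⟩ := hp
    have hd := hf.dist_le_mul _ h2 _ hp'.2.1
    rw [Real.dist_eq] at hd
    have hdd : dist (p.1 + p.2 • h) (p.1 + p.2 • h') = p.2 * ‖h - h'‖ := by
      rw [dist_eq_norm]
      have : p.1 + p.2 • h - (p.1 + p.2 • h') = p.2 • (h - h') := by
        rw [smul_sub]; abel
      rw [this, norm_smul, Real.norm_eq_abs, abs_of_pos h3]
    rw [hdd] at hd
    have key : dq f h p - dq f h' p ≤ L * ‖h - h'‖ := by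
      have : dq f h p - dq f h' p = (f (p.1 + p.2 • h) - f (p.1 + p.2 • h')) / p.2 := by
        rw [dq, dq, div_sub_div_same]; ring_nf
      rw [this, div_le_iff₀ h3]
      calc f (p.1 + p.2 • h) - f (p.1 + p.2 • h')
          ≤ |f (p.1 + p.2 • h) - f (p.1 + p.2 • h')| := le_abs_self _
        _ ≤ L * (p.2 * ‖h - h'‖) := hd
        _ = L * ‖h - h'‖ * p.2 := by ring
    linarith
  rw [clarkeDeriv_eq, clarkeDeriv_eq]
  calc limsup (dq f h) _
      ≤ limsup (fun p => dq f h' p + L * ‖h - h'‖) ((nhds y) ×ˢ (nhdsWithin (0:ℝ) (Set.Ioi 0))) :=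
        Filter.limsup_le_limsup ev ((bddBelow_dq hU hy hf h).isCoboundedUnder_le)
          (isBoundedUnder_of_eventually_le (a := L * ‖h'‖ + L * ‖h - h'‖)
            (((eventually_mem hU hy h').mono fun _ hp => (abs_le.mp (dq_abs_le hf hp)).2).mono
              fun p hp => by linarith))
    _ = limsup (dq f h') ((nhds y) ×ˢ (nhdsWithin (0:ℝ) (Set.Ioi 0))) + L * ‖h - h'‖ :=
        limsup_add_const _ (dq f h') _ (bddAbove_dq hU hy hf h')
          ((bddBelow_dq hU hy hf h').isCoboundedUnder_le)

private lemma clarkeDeriv_add_le (hU : IsOpen U) (hy : y ∈ U) (hf : LipschitzOnWith L f U)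
    (h₁ h₂ : X) : clarkeDeriv f y (h₁ + h₂) ≤ clarkeDeriv f y h₁ + clarkeDeriv f y h₂ := by
  set F := (nhds y) ×ˢ (nhdsWithin (0:ℝ) (Set.Ioi 0)) with hF
  set m : X × ℝ → X × ℝ := fun p => (p.1 + p.2 • h₂, p.2) with hm
  have hten : Tendsto m F F := by
    refine Tendsto.prodMk ?_ tendsto_snd
    have h1 : Tendsto (fun p : X × ℝ => p.1) F (nhds y) := tendsto_fst
    have h2 : Tendsto (fun p : X × ℝ => p.2 • h₂) F (nhds 0) := by
      have : Tendsto (fun p : X × ℝ => p.2) F (nhds 0) :=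
        tendsto_snd.mono_right nhdsWithin_le_nhds
      simpa using this.smul_const h₂
    simpa using h1.add h2
  have key : ∀ p : X × ℝ, dq f (h₁ + h₂) p = (dq f h₁ ∘ m) p + dq f h₂ p := by
    intro p
    simp only [Function.comp, dq, hm, ← add_div]
    congr 1
    have : p.1 + p.2 • (h₁ + h₂) = p.1 + p.2 • h₂ + p.2 • h₁ := by rw [smul_add]; abel
    rw [this]; ring
  have hb1 : ∀ᶠ p in F, |dq f h₁ (m p)| ≤ L * ‖h₁‖ :=
    hten.eventually ((eventually_mem hU hy h₁).mono fun _ hp => dq_abs_le hf hp)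
  have hcomp : limsup (dq f h₁ ∘ m) F ≤ clarkeDeriv f y h₁ := by
    rw [clarkeDeriv_eq]
    have : limsup (dq f h₁ ∘ m) F = limsup (dq f h₁) (Filter.map m F) := by
      rw [Filter.limsup, Filter.limsup, Filter.map_map]
    rw [this]
    exact Filter.limsup_le_limsup_of_le hten
      ((isBoundedUnder_of_eventually_ge (a := -(L * ‖h₁‖))
        (eventually_map.mpr (hb1.mono fun p hp => (abs_le.mp hp).1))).isCoboundedUnder_le)
      (bddAbove_dq hU hy hf h₁)
  have hsum : limsup (fun p => (dq f h₁ ∘ m) p + dq f h₂ p) F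
      ≤ limsup (dq f h₁ ∘ m) F + limsup (dq f h₂) F := by
    have := limsup_add_le (f := F) (u := dq f h₁ ∘ m) (v := dq f h₂)
      (isBoundedUnder_of_eventually_ge (a := -(L * ‖h₁‖))
        (hb1.mono fun p hp => (abs_le.mp hp).1))
      (isBoundedUnder_of_eventually_le (a := L * ‖h₁‖)
        (hb1.mono fun p hp => (abs_le.mp hp).2))
      ((bddBelow_dq hU hy hf h₂).isCoboundedUnder_le)
      (bddAbove_dq hU hy hf h₂)
    exact this
  calc clarkeDeriv f y (h₁ + h₂) = limsup (fun p => (dq f h₁ ∘ m) p + dq f h₂ p) F := by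
        rw [clarkeDeriv_eq]; exact congrArg (fun u => limsup u F) (funext key)
    _ ≤ limsup (dq f h₁ ∘ m) F + limsup (dq f h₂) F := hsum
    _ ≤ clarkeDeriv f y h₁ + clarkeDeriv f y h₂ := by
        rw [clarkeDeriv_eq (x := y) (h := h₂)]; exact add_le_add hcomp le_rfl

end Aux2

section Aux3

open Filter

variable {f : X → ℝ} {L : ℝ≥0} {U : Set X} {y : X}

private lemma tendsto_scale (y : X) {c : ℝ} (hc : 0 < c) :
    Tendsto (fun p : X × ℝ => (p.1, c * p.2))
      ((nhds y) ×ˢ (nhdsWithin (0:ℝ) (Set.Ioi 0)))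
      ((nhds y) ×ˢ (nhdsWithin (0:ℝ) (Set.Ioi 0))) := by
  have h2 : Tendsto (fun t : ℝ => c * t) (nhdsWithin (0:ℝ) (Set.Ioi 0))
      (nhdsWithin (0:ℝ) (Set.Ioi 0)) := by
    rw [tendsto_nhdsWithin_iff]
    constructor
    · have : Tendsto (fun t : ℝ => c * t) (nhds 0) (nhds 0) := by
        simpa using (continuous_mul_left c).tendsto 0
      exact this.mono_left nhdsWithin_le_nhds
    · exact eventually_mem_nhdsWithin.mono fun t ht => by
        exact Set.mem_Ioi.mpr (mul_pos hc ht)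
  exact Tendsto.prodMap tendsto_id h2

private lemma map_scale (y : X) {c : ℝ} (hc : 0 < c) :
    Filter.map (fun p : X × ℝ => (p.1, c * p.2))
      ((nhds y) ×ˢ (nhdsWithin (0:ℝ) (Set.Ioi 0)))
      = (nhds y) ×ˢ (nhdsWithin (0:ℝ) (Set.Ioi 0)) := by
  refine le_antisymm (tendsto_scale y hc) ?_
  have hcomp : (fun p : X × ℝ => (p.1, c * p.2)) ∘ (fun p : X × ℝ => (p.1, c⁻¹ * p.2)) = id := by
    funext p
    simp [Function.comp, mul_inv_cancel_left₀ hc.ne']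
  conv_lhs => rw [show ((nhds y) ×ˢ (nhdsWithin (0:ℝ) (Set.Ioi 0)))
    = Filter.map ((fun p : X × ℝ => (p.1, c * p.2)) ∘ (fun p : X × ℝ => (p.1, c⁻¹ * p.2)))
      ((nhds y) ×ˢ (nhdsWithin (0:ℝ) (Set.Ioi 0))) from by rw [hcomp, Filter.map_id]]
  rw [← Filter.map_map]
  exact Filter.map_mono (tendsto_scale y (inv_pos.mpr hc))

private lemma clarkeDeriv_smul (hU : IsOpen U) (hy : y ∈ U) (hf : LipschitzOnWith L f U)
    {c : ℝ} (hc : 0 < c) (h : X) : clarkeDeriv f y (c • h) = c * clarkeDeriv f y h := by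
  set F := (nhds y) ×ˢ (nhdsWithin (0:ℝ) (Set.Ioi 0)) with hF
  set m : X × ℝ → X × ℝ := fun p => (p.1, c * p.2) with hm
  have key : dq f (c • h) = fun p => c * (dq f h ∘ m) p := by
    funext p
    simp only [Function.comp, dq, hm]
    have h1 : p.2 • (c • h) = (c * p.2) • h := by rw [smul_smul, mul_comm]
    rw [h1]
    rcases eq_or_ne p.2 0 with h2 | h2
    · simp [h2]
    · field_simp
  have hten : Tendsto m F F := tendsto_scale y hc
  have hb1 : ∀ᶠ p in F, |dq f h (m p)| ≤ L * ‖h‖ :=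
    hten.eventually ((eventually_mem hU hy h).mono fun _ hp => dq_abs_le hf hp)
  have hbdd : IsBoundedUnder (· ≤ ·) F (dq f h ∘ m) :=
    isBoundedUnder_of_eventually_le (a := L * ‖h‖) (hb1.mono fun p hp => (abs_le.mp hp).2)
  have hcob : IsCoboundedUnder (· ≤ ·) F (dq f h ∘ m) :=
    (isBoundedUnder_of_eventually_ge (a := -(L * ‖h‖))
      (hb1.mono fun p hp => (abs_le.mp hp).1)).isCoboundedUnder_le
  have hmono : Monotone (fun x : ℝ => c * x) := fun u v huv => by
    exact mul_le_mul_of_nonneg_left huv hc.le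
  have step1 : c * limsup (dq f h ∘ m) F = limsup (fun p => c * (dq f h ∘ m) p) F := by
    have := hmono.map_limsup_of_continuousAt (F := F) (dq f h ∘ m)
      ((continuous_mul_left c).continuousAt) hbdd hcob
    exact this
  have step2 : limsup (dq f h ∘ m) F = limsup (dq f h) F := by
    have h1 : limsup (dq f h ∘ m) F = limsup (dq f h) (Filter.map m F) := by
      rw [Filter.limsup, Filter.limsup, Filter.map_map]
    rw [h1, hF]
    rw [map_scale y hc]
  rw [clarkeDeriv_eq, clarkeDeriv_eq, key, ← step1, step2]

end Aux3

section Aux4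

open Filter

variable {f : X → ℝ} {L : ℝ≥0} {U : Set X} {y : X}

private lemma exists_grad_elt (hU : IsOpen U) (hy : y ∈ U) (hf : LipschitzOnWith L f U)
    {h0 : X} (hh0 : h0 ≠ 0) :
    ∃ g : StrongDual ℝ X, g ∈ clarkeGrad f y ∧ g h0 = clarkeDeriv f y h0 := by
  have N_hom : ∀ c : ℝ, 0 < c → ∀ x : X, clarkeDeriv f y (c • x) = c * clarkeDeriv f y x :=
    fun c hc x => clarkeDeriv_smul hU hy hf hc x
  have N_add : ∀ x z : X, clarkeDeriv f y (x + z) ≤ clarkeDeriv f y x + clarkeDeriv f y z :=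
    fun x z => clarkeDeriv_add_le hU hy hf x z
  have N_zero : clarkeDeriv f y (0 : X) = 0 := by
    have := N_hom 2 two_pos 0
    rw [smul_zero] at this
    linarith
  have hdom : ∀ x : (LinearPMap.mkSpanSingleton (K := ℝ) (σ := RingHom.id ℝ) h0 (clarkeDeriv f y h0) hh0).domain,
      (LinearPMap.mkSpanSingleton (K := ℝ) (σ := RingHom.id ℝ) h0 (clarkeDeriv f y h0) hh0) x ≤ clarkeDeriv f y x := by
    rintro ⟨v, hv⟩
    obtain ⟨cc, rfl⟩ := Submodule.mem_span_singleton.mp hv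
    have Hc : ∀ c : ℝ, c • h0 = 0 → c • clarkeDeriv f y h0 = 0 := fun c hc => by
      rw [(smul_eq_zero.mp hc).resolve_right hh0, zero_smul]
    have happ : (LinearPMap.mkSpanSingleton (K := ℝ) (σ := RingHom.id ℝ) h0 (clarkeDeriv f y h0) hh0) ⟨cc • h0, hv⟩
        = cc • clarkeDeriv f y h0 :=
      LinearPMap.mkSpanSingleton'_apply (R := ℝ) h0 (clarkeDeriv f y h0) Hc cc hv
    rw [happ, smul_eq_mul]
    rcases lt_trichotomy cc 0 with hcc | hcc | hcc
    · have h1 : clarkeDeriv f y (cc • h0) + clarkeDeriv f y ((-cc) • h0)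
          ≥ clarkeDeriv f y (0 : X) := by
        have := N_add (cc • h0) ((-cc) • h0)
        have h2 : cc • h0 + (-cc) • h0 = 0 := by rw [neg_smul]; abel
        rw [h2] at this; linarith
      have h3 : clarkeDeriv f y ((-cc) • h0) = (-cc) * clarkeDeriv f y h0 :=
        N_hom (-cc) (by linarith) h0
      rw [N_zero] at h1
      simp only
      nlinarith
    · subst hcc; simp [N_zero]
    · simp only
      rw [N_hom cc hcc h0]
  obtain ⟨g, hg_eq, hg_le⟩ := exists_extension_of_le_sublinear
    (LinearPMap.mkSpanSingleton (K := ℝ) (σ := RingHom.id ℝ) h0 (clarkeDeriv f y h0) hh0) (clarkeDeriv f y) N_hom N_add hdom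
  have hgbound : ∀ x : X, ‖g x‖ ≤ (L : ℝ) * ‖x‖ := by
    intro x
    rw [Real.norm_eq_abs, abs_le]
    constructor
    · have h1 : g (-x) ≤ clarkeDeriv f y (-x) := hg_le (-x)
      have h2 : clarkeDeriv f y (-x) ≤ L * ‖-x‖ := clarkeDeriv_le hU hy hf (-x)
      rw [norm_neg] at h2
      rw [map_neg] at h1
      linarith
    · exact (hg_le x).trans (clarkeDeriv_le hU hy hf x)
  refine ⟨g.mkContinuous L hgbound, fun h => ?_, ?_⟩
  · exact hg_le h
  · have h1 : g h0 = (LinearPMap.mkSpanSingleton (K := ℝ) (σ := RingHom.id ℝ) h0 (clarkeDeriv f y h0) hh0)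
        ⟨h0, Submodule.mem_span_singleton_self h0⟩ :=
      hg_eq ⟨h0, Submodule.mem_span_singleton_self h0⟩
    have h2 : (LinearPMap.mkSpanSingleton (K := ℝ) (σ := RingHom.id ℝ) h0 (clarkeDeriv f y h0) hh0)
        ⟨h0, Submodule.mem_span_singleton_self h0⟩ = clarkeDeriv f y h0 :=
      LinearPMap.mkSpanSingleton'_apply_self (R := ℝ) h0 (clarkeDeriv f y h0) _ _
    show g h0 = clarkeDeriv f y h0
    rw [h1]
    exact h2
  
private lemma clarkeGrad_subset_setGrad {A : Set X} (hy : y ∈ A) :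
    clarkeGrad f y ⊆ setGrad f A := by
  intro g hg
  show StrongDual.toWeakDual g ∈ closure ((StrongDual.toWeakDual (𝕜 := ℝ) (E := X)) ''
    (convexHull ℝ (⋃ y ∈ A, clarkeGrad f y)))
  exact subset_closure (Set.mem_image_of_mem _ (subset_convexHull ℝ _ (Set.mem_biUnion hy hg)))

private lemma convex_setGrad (f : X → ℝ) (A : Set X) : Convex ℝ (setGrad f A) := by
  have h1 : Convex ℝ ((StrongDual.toWeakDual (𝕜 := ℝ) (E := X)) ''
      (convexHull ℝ (⋃ y ∈ A, clarkeGrad f y))) :=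
    (convex_convexHull ℝ _).linear_image (StrongDual.toWeakDual (𝕜 := ℝ) (E := X)).toLinearMap
  have h2 : Convex ℝ (closure ((StrongDual.toWeakDual (𝕜 := ℝ) (E := X)) ''
      (convexHull ℝ (⋃ y ∈ A, clarkeGrad f y)))) := h1.closure
  have h3 : setGrad f A = (StrongDual.toWeakDual (𝕜 := ℝ) (E := X)).toLinearMap ⁻¹'
      (closure ((StrongDual.toWeakDual (𝕜 := ℝ) (E := X)) ''
      (convexHull ℝ (⋃ y ∈ A, clarkeGrad f y)))) := rfl
  rw [h3]
  exact h2.linear_preimage _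

end Aux4

section Aux5

open Filter

/-- Key compactness lemma via reflexivity and Banach–Alaoglu. -/
private lemma cluster_lemma (hrefl : Function.Surjective (inclusionInDoubleDual ℝ X))
    (b g : StrongDual ℝ X) (r s : ℝ)
    (hx : ∀ ε : ℝ, 0 < ε → ∃ x : X, ‖x‖ ≤ 1 ∧ r - ε ≤ b x ∧ s ≤ g x) :
    ∃ x : X, ‖x‖ ≤ 1 ∧ r ≤ b x ∧ s ≤ g x := by
  set T : WeakDual ℝ (StrongDual ℝ X) → ℝ × ℝ := fun Φ => (Φ b, Φ g) with hT
  have hTcont : Continuous T := (WeakDual.eval_continuous b).prodMk (WeakDual.eval_continuous g)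
  set B : Set (WeakDual ℝ (StrongDual ℝ X)) :=
    (WeakDual.toStrongDual (𝕜 := ℝ) (E := StrongDual ℝ X)) ⁻¹' Metric.closedBall 0 1 with hB
  have hBcomp : IsCompact B := WeakDual.isCompact_closedBall 0 1
  have hK : IsCompact (T '' B) := hBcomp.image hTcont
  -- the sequence of nested compact sets
  set C : ℕ → Set (ℝ × ℝ) := fun n =>
    (T '' B) ∩ (Set.Ici (r - 1/(n+1)) ×ˢ Set.Ici s) with hC
  have hCsub : ∀ n, C (n+1) ⊆ C n := by
    intro n
    apply Set.inter_subset_inter_right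
    apply Set.prod_mono_left
    apply Set.Ici_subset_Ici.mpr
    have : (1:ℝ)/(n+1+1) ≤ 1/(n+1) := by
      apply div_le_div_of_nonneg_left one_pos.le (by positivity)
      push_cast; linarith
    push_cast
    push_cast at this
    linarith
  have hCnonempty : ∀ n : ℕ, (C n).Nonempty := by
    intro n
    obtain ⟨x, hx1, hx2, hx3⟩ := hx (1/(n+1)) (by positivity)
    refine ⟨T (StrongDual.toWeakDual (inclusionInDoubleDual ℝ X x)), ⟨?_, ?_⟩⟩
    · refine Set.mem_image_of_mem T ?_
      rw [hB, Set.mem_preimage, Metric.mem_closedBall]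
      refine (dist_zero_right (E := StrongDual ℝ (StrongDual ℝ X)) _).le.trans ?_
      calc ‖(inclusionInDoubleDual ℝ X) x‖ ≤ ‖x‖ := double_dual_bound ℝ X x
        _ ≤ 1 := hx1
    · constructor
      · exact hx2
      · exact hx3
  have hCclosed : ∀ n, IsClosed (C n) :=
    fun n => hK.isClosed.inter ((isClosed_Ici.prod isClosed_Ici))
  have hCcomp : IsCompact (C 0) := hK.inter_right ((isClosed_Ici.prod isClosed_Ici))
  obtain ⟨p, hp⟩ := IsCompact.nonempty_iInter_of_sequence_nonempty_isCompact_isClosed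
    C hCsub hCnonempty hCcomp hCclosed
  simp only [Set.mem_iInter] at hp
  obtain ⟨Φ, hΦB, hΦT⟩ := (hp 0).1
  have hr : r ≤ p.1 := by
    by_contra hcon
    push_neg at hcon
    obtain ⟨n, hn⟩ := exists_nat_one_div_lt (show (0:ℝ) < r - p.1 by linarith)
    have := (hp n).2.1
    simp only [Set.mem_Ici] at this
    push_cast at hn this
    linarith
  have hs : s ≤ p.2 := by
    have := (hp 0).2.2
    simpa using this
  obtain ⟨x, hxval⟩ := hrefl (WeakDual.toStrongDual Φ)
  have hxnorm : ‖x‖ ≤ 1 := by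
    have h1 : ‖(inclusionInDoubleDual ℝ X) x‖ = ‖x‖ :=
      (inclusionInDoubleDualLi ℝ (E := X)).norm_map x
    rw [hxval] at h1
    rw [← h1]
    rw [hB, Set.mem_preimage, Metric.mem_closedBall] at hΦB
    exact (dist_zero_right (E := StrongDual ℝ (StrongDual ℝ X)) _).symm.le.trans hΦB
  have hbx : b x = p.1 := by
    have h5 : Φ b = p.1 := congrArg Prod.fst hΦT
    rw [← h5]
    calc b x = (inclusionInDoubleDual ℝ X x) b := rfl
      _ = (WeakDual.toStrongDual (𝕜 := ℝ) (E := StrongDual ℝ X)) Φ b := by rw [hxval]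
      _ = Φ b := rfl
  have hgx : g x = p.2 := by
    have h5 : Φ g = p.2 := congrArg Prod.snd hΦT
    rw [← h5]
    calc g x = (inclusionInDoubleDual ℝ X x) g := rfl
      _ = (WeakDual.toStrongDual (𝕜 := ℝ) (E := StrongDual ℝ X)) Φ g := by rw [hxval]
      _ = Φ g := rfl
  exact ⟨x, hxnorm, by rw [hbx]; exact hr, by rw [hgx]; exact hs⟩

/-- In a reflexive space every functional attains its norm on the closed unit ball. -/
private lemma exists_norming (hrefl : Function.Surjective (inclusionInDoubleDual ℝ X))
    (b : StrongDual ℝ X) : ∃ x : X, ‖x‖ ≤ 1 ∧ b x = ‖b‖ := by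
  have hx : ∀ ε : ℝ, 0 < ε → ∃ x : X, ‖x‖ ≤ 1 ∧ ‖b‖ - ε ≤ b x ∧ (0:ℝ) ≤ (0 : StrongDual ℝ X) x := by
    intro ε hε
    rcases le_or_gt ‖b‖ ε with hle | hlt
    · exact ⟨0, by simp, by simp; linarith, by simp⟩
    · obtain ⟨x, hx1, hx2⟩ := b.exists_lt_apply_of_lt_opNorm (show ‖b‖ - ε < ‖b‖ by linarith)
      rcases le_or_gt 0 (b x) with hbx | hbx
      · refine ⟨x, hx1.le, ?_, by simp⟩
        rw [Real.norm_eq_abs, abs_of_nonneg hbx] at hx2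
        linarith
      · refine ⟨-x, by rw [norm_neg]; exact hx1.le, ?_, by simp⟩
        rw [Real.norm_eq_abs, abs_of_neg hbx] at hx2
        rw [map_neg]
        linarith
  obtain ⟨x, h1, h2, _⟩ := cluster_lemma hrefl b 0 ‖b‖ 0 hx
  refine ⟨x, h1, le_antisymm ?_ h2⟩
  calc b x ≤ ‖b x‖ := Real.le_norm_self _
    _ ≤ ‖b‖ * ‖x‖ := b.le_opNorm x
    _ ≤ ‖b‖ * 1 := by nlinarith [norm_nonneg b]
    _ = ‖b‖ := mul_one _

/-- Uniqueness of the norming point, by strict convexity. -/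
private lemma norming_unique [StrictConvexSpace ℝ X] {b : StrongDual ℝ X} (hb : b ≠ 0) {x₁ x₂ : X}
    (h₁ : ‖x₁‖ ≤ 1 ∧ b x₁ = ‖b‖) (h₂ : ‖x₂‖ ≤ 1 ∧ b x₂ = ‖b‖) : x₁ = x₂ := by
  have hbpos : 0 < ‖b‖ := norm_pos_iff.mpr hb
  have hn : ∀ x : X, ‖x‖ ≤ 1 → b x = ‖b‖ → ‖x‖ = 1 := by
    intro x hx1 hx2
    refine le_antisymm hx1 ?_
    by_contra hcon
    push_neg at hcon
    have : b x ≤ ‖b x‖ := Real.le_norm_self _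
    have h3 : ‖b x‖ ≤ ‖b‖ * ‖x‖ := b.le_opNorm x
    nlinarith
  have e1 : ‖x₁‖ = 1 := hn x₁ h₁.1 h₁.2
  have e2 : ‖x₂‖ = 1 := hn x₂ h₂.1 h₂.2
  by_contra hne
  have hmid : ‖(1/2 : ℝ) • (x₁ + x₂)‖ < ‖x₁‖ :=
    (norm_midpoint_lt_iff (by rw [e1, e2])).mpr hne
  rw [e1] at hmid
  have hb2 : b ((1/2 : ℝ) • (x₁ + x₂)) = ‖b‖ := by
    rw [map_smul, map_add, h₁.2, h₂.2]
    simp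
    ring
  have : b ((1/2 : ℝ) • (x₁ + x₂)) ≤ ‖b‖ * ‖(1/2 : ℝ) • (x₁ + x₂)‖ :=
    (Real.le_norm_self _).trans (b.le_opNorm _)
  nlinarith

end Aux5

section Aux6

open Filter

private lemma grad_ge [StrictConvexSpace ℝ X]
    (hrefl : Function.Surjective (inclusionInDoubleDual ℝ X))
    {f : X → ℝ} {A : Set X} (h0 : (0 : StrongDual ℝ X) ∉ setGrad f A)
    {a : StrongDual ℝ X} (ha : a ∈ setGrad f A) (hmin : ∀ b ∈ setGrad f A, ‖a‖ ≤ ‖b‖) :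
    ∃ x : X, ‖x‖ = 1 ∧ a x = ‖a‖ ∧ ∀ g ∈ setGrad f A, ‖a‖ ≤ g x := by
  have hane : a ≠ 0 := fun hh => h0 (hh ▸ ha)
  have hapos : 0 < ‖a‖ := norm_pos_iff.mpr hane
  obtain ⟨x, hx1, hx2⟩ := exists_norming hrefl a
  have hx1' : ‖x‖ = 1 := by
    refine le_antisymm hx1 ?_
    have h3 : a x ≤ ‖a x‖ := Real.le_norm_self _
    have h4 : ‖a x‖ ≤ ‖a‖ * ‖x‖ := a.le_opNorm x
    nlinarith
  refine ⟨x, hx1', hx2, ?_⟩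
  intro g hg
  have key : ∀ ε : ℝ, 0 < ε → ∃ z : X, ‖z‖ ≤ 1 ∧ ‖a‖ - ε ≤ a z ∧ ‖a‖ ≤ g z := by
    intro ε hε
    set t := min (1/2 : ℝ) (ε / (2*(‖g‖+‖a‖)+1)) with hts
    have hd : (0:ℝ) < 2*(‖g‖+‖a‖)+1 := by positivity
    have ht0 : 0 < t := lt_min (by norm_num) (by positivity)
    have ht12 : t ≤ 1/2 := min_le_left _ _
    have htd : t * (2*(‖g‖+‖a‖)+1) ≤ ε := (le_div_iff₀ hd).mp (min_le_right _ _)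
    have htε : t * (‖g‖+‖a‖) ≤ ε/2 := by nlinarith
    have hmem : (1-t) • a + t • g ∈ setGrad f A :=
      convex_setGrad f A ha hg (by linarith) (by linarith) (by ring)
    have hat_norm : ‖a‖ ≤ ‖(1-t) • a + t • g‖ := hmin _ hmem
    obtain ⟨z, hz1, hz2⟩ := exists_norming hrefl ((1-t) • a + t • g)
    have happly : (1-t) * a z + t * g z = ((1-t) • a + t • g) z := by
      simp [ContinuousLinearMap.add_apply, ContinuousLinearMap.smul_apply, smul_eq_mul]
    have hbig : ‖a‖ ≤ (1-t) * a z + t * g z := by rw [happly, hz2]; exact hat_norm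
    have hgz : g z ≤ ‖g‖ := by
      have h5 : g z ≤ ‖g z‖ := Real.le_norm_self _
      have h6 : ‖g z‖ ≤ ‖g‖ * ‖z‖ := g.le_opNorm z
      nlinarith [norm_nonneg g]
    have haz : a z ≤ ‖a‖ := by
      have h5 : a z ≤ ‖a z‖ := Real.le_norm_self _
      have h6 : ‖a z‖ ≤ ‖a‖ * ‖z‖ := a.le_opNorm z
      nlinarith
    refine ⟨z, hz1, ?_, ?_⟩
    · nlinarith [norm_nonneg g, norm_nonneg a]
    · nlinarith
  obtain ⟨z, hz1, hz2, hz3⟩ := cluster_lemma hrefl a g ‖a‖ ‖a‖ key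
  have hz2' : a z = ‖a‖ := by
    refine le_antisymm ?_ hz2
    have h5 : a z ≤ ‖a z‖ := Real.le_norm_self _
    have h6 : ‖a z‖ ≤ ‖a‖ * ‖z‖ := a.le_opNorm z
    nlinarith
  have hzx : z = x := norming_unique hane ⟨hz1, hz2'⟩ ⟨hx1, hx2⟩
  rw [← hzx]
  exact hz3

end Aux6

/-- Corollary 3.6 (stability of descent directions): every `h` with
`‖h − h̃‖ < ‖ã‖/L` is a descent direction of `f` on `A`. -/
theorem descent_direction_stability
    [CompleteSpace X] [StrictConvexSpace ℝ X] [StrictConvexSpace ℝ (StrongDual ℝ X)]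
    (hrefl : Function.Surjective (inclusionInDoubleDual ℝ X))
    (A : Set X) (hA : A.Nonempty) (f : X → ℝ) (L : ℝ≥0)
    (hf : ∃ U : Set X, IsOpen U ∧ A ⊆ U ∧ LipschitzOnWith L f U)
    (h0 : (0 : StrongDual ℝ X) ∉ setGrad f A)
    (a : StrongDual ℝ X) (ha : a ∈ setGrad f A) (hmin : ∀ b ∈ setGrad f A, ‖a‖ ≤ ‖b‖)
    (ht : X) (hopt : IsOptimalDescent f A ht) :
    ∀ h : X, ‖h - ht‖ < ‖a‖ / L → setDeriv f A h < 0 := by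
  intro h hlt
  obtain ⟨U, hU, hAU, hf⟩ := hf
  have hL : 0 < (L : ℝ) := by
    rcases eq_or_ne (L : ℝ) 0 with h0' | h0'
    · exfalso
      rw [h0', div_zero] at hlt
      exact absurd hlt (not_lt.mpr (norm_nonneg _))
    · exact lt_of_le_of_ne (NNReal.coe_nonneg L) (Ne.symm h0')
  have hLlt : (L : ℝ) * ‖h - ht‖ < ‖a‖ := by
    rw [mul_comm]
    exact (lt_div_iff₀ hL).mp hlt
  obtain ⟨x, hx1, hx2, hx3⟩ := grad_ge hrefl h0 ha hmin
  have hxne : x ≠ 0 := by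
    intro hcon
    rw [hcon, norm_zero] at hx1
    norm_num at hx1
  have step1 : ∀ y ∈ A, clarkeDeriv f y (-x) ≤ -‖a‖ := by
    intro y hy
    obtain ⟨g, hg1, hg2⟩ := exists_grad_elt hU (hAU hy) hf (neg_ne_zero.mpr hxne)
    rw [← hg2, map_neg]
    have := hx3 g (clarkeGrad_subset_setGrad hy hg1)
    linarith
  have hsd_negx : setDeriv f A (-x) ≤ -‖a‖ := by
    rw [setDeriv]
    refine csSup_le (hA.image _) ?_
    rintro v ⟨y, hy, rfl⟩
    exact step1 y hy
  have hsd_ht : setDeriv f A ht ≤ -‖a‖ :=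
    (hopt.2.1 (-x) (by rw [norm_neg, hx1])).trans hsd_negx
  have hbdd : BddAbove ((fun y => clarkeDeriv f y ht) '' A) := by
    refine ⟨L * ‖ht‖, ?_⟩
    rintro v ⟨y, hy, rfl⟩
    exact clarkeDeriv_le hU (hAU hy) hf ht
  have main : setDeriv f A h ≤ setDeriv f A ht + L * ‖h - ht‖ := by
    rw [setDeriv]
    refine csSup_le (hA.image _) ?_
    rintro v ⟨y, hy, rfl⟩
    have h1 : clarkeDeriv f y h ≤ clarkeDeriv f y ht + L * ‖h - ht‖ :=
      clarkeDeriv_le_add hU (hAU hy) hf h ht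
    have h2 : clarkeDeriv f y ht ≤ setDeriv f A ht :=
      le_csSup hbdd (Set.mem_image_of_mem _ hy)
    linarith
  linarith
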